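/- arXiv:1802.00867 — 5 statements merged into one kernel-verified Lean document; each statement's English description precedes it below -/
import Mathlib

section
/- Let G be an ω-narrow semitopological group acting separately continuously and transitively on a Baire space X via θ : G × X → X. Then for every x ∈ X the orbit map θ^x : G → X, g ↦ θ(g,x), is a skeletal map; that is, for every nonempty open set U ⊆ G, the closure of θ^x(U) in X has nonempty interior. -/
/-!
Translate a nonempty open `U ∋ u` to the neighbourhood `V = U u⁻¹` of `1`. By ω-narrowness
countably many left translates `aV` cover `G`, so by transitivity the sets `θ_a(θ^y(V))`, with
`y = θ(u, x)`, cover `X`. Each `θ_a` is a homeomorphism, so by the Baire property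
`θ^y(V) ⊆ θ^x(U)` is somewhere dense.
-/

open Pointwise

def actionHomeomorph {G X : Type*} [Group G] [TopologicalSpace X] (θ : G → X → X)
    (hone : ∀ x : X, θ 1 x = x)
    (hcomp : ∀ (g h : G) (x : X), θ (g * h) x = θ g (θ h x))
    (hcont : ∀ g : G, Continuous (θ g)) (g : G) : X ≃ₜ X where
  toFun := θ g
  invFun := θ g⁻¹
  left_inv z := by rw [← hcomp, inv_mul_cancel, hone]
  right_inv z := by rw [← hcomp, mul_inv_cancel, hone]
  continuous_toFun := hcont g
  continuous_invFun := hcont g⁻¹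

theorem interior_closure_nonempty_of_iUnion_homeomorph_image_eq_univ {X ι : Type*}
    [TopologicalSpace X] [BaireSpace X] [Nonempty X] [Countable ι] (e : ι → X ≃ₜ X)
    {S : Set X} (hS : ⋃ i, e i '' S = Set.univ) : (interior (closure S)).Nonempty := by
  have hcover : ⋃ i, closure (e i '' S) = Set.univ :=
    Set.eq_univ_of_univ_subset (hS ▸ Set.iUnion_mono fun _ => subset_closure)
  obtain ⟨i, hi⟩ := nonempty_interior_of_iUnion_of_closed (fun _ => isClosed_closure) hcover
  rw [← (e i).image_closure, ← (e i).image_interior] at hi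
  exact hi.of_image

theorem iUnion_image_orbit_eq_univ {G X : Type*} [Mul G] (θ : G → X → X)
    (hcomp : ∀ (g h : G) (x : X), θ (g * h) x = θ g (θ h x)) {y : X}
    (hy : Function.Surjective fun g : G => θ g y) {A V : Set G} (hAV : A * V = Set.univ) :
    ⋃ a : A, θ a '' ((fun g : G => θ g y) '' V) = Set.univ := by
  refine Set.eq_univ_of_forall fun z => ?_
  obtain ⟨g, rfl⟩ := hy z
  obtain ⟨a, ha, v, hv, rfl⟩ : g ∈ A * V := hAV ▸ Set.mem_univ g
  exact Set.mem_iUnion.2 ⟨⟨a, ha⟩, θ v y, ⟨v, hv, rfl⟩, (hcomp a v y).symm⟩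

theorem orbitMap_skeletal_general {G X : Type*} [Group G] [TopologicalSpace G] [TopologicalSpace X]
    [BaireSpace X]
    -- `G` is a semitopological group: multiplication is separately continuous
    (hmul_right : ∀ g : G, Continuous fun h : G => h * g)
    -- `G` is ω-narrow
    (hnarrow : ∀ U ∈ nhds (1 : G), ∃ A : Set G, A.Countable ∧ U * A = Set.univ ∧
      A * U = Set.univ)
    -- `θ` is an action
    (θ : G → X → X)
    (hone : ∀ x : X, θ 1 x = x)
    (hcomp : ∀ (g h : G) (x : X), θ (g * h) x = θ g (θ h x))
    -- `θ` is separately continuous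
    (hsep₁ : ∀ g : G, Continuous (θ g))
    -- `θ` is transitive
    (htrans : ∀ x : X, Function.Surjective fun g : G => θ g x)
    (x : X) :
    ∀ U : Set G, IsOpen U → U.Nonempty →
      (interior (closure ((fun g : G => θ g x) '' U))).Nonempty := by
  intro U hU ⟨u, hu⟩
  set V : Set G := (fun h : G => h * u) ⁻¹' U
  have hV : V ∈ nhds (1 : G) := (hU.preimage (hmul_right u)).mem_nhds (by simpa [V] using hu)
  obtain ⟨A, hA, -, hAV⟩ := hnarrow V hV
  have : Countable A := hA.to_subtype
  have : Nonempty X := ⟨x⟩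
  have hsub : (fun g : G => θ g (θ u x)) '' V ⊆ (fun g : G => θ g x) '' U := by
    rintro _ ⟨v, hv, rfl⟩
    exact ⟨v * u, hv, hcomp v u x⟩
  refine (interior_closure_nonempty_of_iUnion_homeomorph_image_eq_univ
    (fun a : A => actionHomeomorph θ hone hcomp hsep₁ a) ?_).mono
    (interior_mono (closure_mono hsub))
  exact iUnion_image_orbit_eq_univ θ hcomp (htrans _) hAV

/-- For a separately continuous transitive action of an ω-narrow
semitopological group `G` on a Baire space `X`, every orbit map `g ↦ θ g x` is skeletal. -/
theorem orbitMap_skeletal {G X : Type*} [Group G] [TopologicalSpace G] [TopologicalSpace X]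
    [BaireSpace X]
    -- `G` is a semitopological group: multiplication is separately continuous
    (hmul_left : ∀ g : G, Continuous fun h : G => g * h)
    (hmul_right : ∀ g : G, Continuous fun h : G => h * g)
    -- `G` is ω-narrow
    (hnarrow : ∀ U ∈ nhds (1 : G), ∃ A : Set G, A.Countable ∧ U * A = Set.univ ∧
      A * U = Set.univ)
    -- `θ` is an action
    (θ : G → X → X)
    (hone : ∀ x : X, θ 1 x = x)
    (hcomp : ∀ (g h : G) (x : X), θ (g * h) x = θ g (θ h x))
    -- `θ` is separately continuous
    (hsep₁ : ∀ g : G, Continuous (θ g))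
    (hsep₂ : ∀ x : X, Continuous fun g : G => θ g x)
    -- `θ` is transitive
    (htrans : ∀ x : X, Function.Surjective fun g : G => θ g x)
    (x : X) :
    ∀ U : Set G, IsOpen U → U.Nonempty →
      (interior (closure ((fun g : G => θ g x) '' U))).Nonempty :=
  orbitMap_skeletal_general hmul_right hnarrow θ hone hcomp hsep₁ htrans x
end

section
/- Let θ : G × X → X be a continuous action of an ω-narrow semitopological group G on a space X, and let Θ : G × C*(X) → C*(X) be the induced right action Θ(g,f) = f ∘ θ_g on the Banach space C*(X) of bounded continuous functions with the sup norm. If f ∈ C*(X) is right-uniformly continuous, then the orbit fG = {Θ(g,f) : g ∈ G} is a separable subset of C*(X). -/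
open Pointwise Metric Set TopologicalSpace BoundedContinuousFunction

/-!
Fix `ε > 0` and a neighbourhood `O` of `1` on which `f` moves by less than `ε`. By ω-narrowness
`G = O * A` for a countable `A`. For `g = o * a` we have `Θ g f = Θ a (Θ o f)`, and `Θ a` does not
increase sup-distances, so `Θ g f` lies within `ε` of `Θ a f`. Hence the countable sets
`{Θ a f : a ∈ A}` are `ε`-dense in the orbit for every `ε`, which makes the orbit separable.
-/

theorem isSeparable_of_forall_exists_countable_closedBall_cover {α : Type*}
    [PseudoMetricSpace α] {s : Set α}
    (h : ∀ ε > 0, ∃ t : Set α, t.Countable ∧ s ⊆ ⋃ x ∈ t, closedBall x ε) : IsSeparable s := by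
  obtain ⟨t, -, htc, hst⟩ := UniformSpace.subset_countable_closure_of_almost_dense_set s
    fun U hU => by
      obtain ⟨ε, hε, hεU⟩ := mem_uniformity_dist.1 hU
      obtain ⟨t, htc, hst⟩ := h (ε / 2) (half_pos hε)
      refine ⟨t, htc, hst.trans <| iUnion₂_mono fun x _ y hy => hεU ?_⟩
      rw [dist_comm]
      exact (mem_closedBall.1 hy).trans_lt (half_lt_self hε)
  exact ⟨t, htc, hst⟩

section OrbitOfRightAction

variable {G X : Type*} [Mul G] [TopologicalSpace X] {θ : G → X → X}
  {Θ : G → (X →ᵇ ℝ) → (X →ᵇ ℝ)}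

theorem dist_orbit_mul_le (hcomp : ∀ (g h : G) (x : X), θ (g * h) x = θ g (θ h x))
    (hΘ : ∀ (g : G) (f : X →ᵇ ℝ) (x : X), Θ g f x = f (θ g x)) {f : X →ᵇ ℝ} {o : G} {ε : ℝ}
    (hε : 0 ≤ ε) (ho : ∀ x, |f x - f (θ o x)| ≤ ε) (a : G) :
    dist (Θ (o * a) f) (Θ a f) ≤ ε := by
  refine (BoundedContinuousFunction.dist_le hε).2 fun x => ?_
  rw [hΘ, hΘ, hcomp, Real.dist_eq, abs_sub_comm]
  exact ho (θ a x)

theorem range_orbit_subset_iUnion_closedBall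
    (hcomp : ∀ (g h : G) (x : X), θ (g * h) x = θ g (θ h x))
    (hΘ : ∀ (g : G) (f : X →ᵇ ℝ) (x : X), Θ g f x = f (θ g x)) {f : X →ᵇ ℝ} {O A : Set G}
    (hOA : O * A = univ) {ε : ℝ} (hε : 0 ≤ ε) (hO : ∀ o ∈ O, ∀ x, |f x - f (θ o x)| ≤ ε) :
    range (fun g => Θ g f) ⊆ ⋃ h ∈ (fun a => Θ a f) '' A, closedBall h ε := by
  rintro _ ⟨g, rfl⟩
  obtain ⟨o, ho, a, ha, rfl⟩ : g ∈ O * A := hOA ▸ mem_univ g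
  rw [biUnion_image]
  exact mem_biUnion ha (dist_orbit_mul_le hcomp hΘ hε (hO o ho) a)

end OrbitOfRightAction

theorem orbit_separable_general {G X : Type*} [Group G] [TopologicalSpace G] [TopologicalSpace X]
    (hnarrow : ∀ U ∈ nhds (1 : G), ∃ A : Set G, A.Countable ∧ U * A = Set.univ ∧
      A * U = Set.univ)
    (θ : G → X → X)
    (hcomp : ∀ (g h : G) (x : X), θ (g * h) x = θ g (θ h x))
    (Θ : G → BoundedContinuousFunction X ℝ → BoundedContinuousFunction X ℝ)
    (hΘ : ∀ (g : G) (f : BoundedContinuousFunction X ℝ) (x : X), Θ g f x = f (θ g x))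
    (f : BoundedContinuousFunction X ℝ)
    -- `f` is right-uniformly continuous
    (hruc : ∀ ε > (0 : ℝ), ∃ O ∈ nhds (1 : G), ∀ g ∈ O, ∀ x : X, |f x - f (θ g x)| < ε) :
    TopologicalSpace.IsSeparable (Set.range fun g : G => Θ g f) := by
  refine isSeparable_of_forall_exists_countable_closedBall_cover fun ε hε => ?_
  obtain ⟨O, hO, hOf⟩ := hruc ε hε
  obtain ⟨A, hA, hOA, -⟩ := hnarrow O hO
  exact ⟨_, hA.image _, range_orbit_subset_iUnion_closedBall hcomp hΘ hOA hε.le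
    fun o ho x => (hOf o ho x).le⟩

/-- For a continuous action of an ω-narrow semitopological group `G` on `X`
and a right-uniformly continuous `f ∈ C*(X)`, the orbit `{f ∘ θ g : g ∈ G}` is a separable
subset of the Banach space of bounded continuous functions with the sup norm. -/
theorem orbit_separable {G X : Type*} [Group G] [TopologicalSpace G] [TopologicalSpace X]
    (hmul_left : ∀ g : G, Continuous fun h : G => g * h)
    (hmul_right : ∀ g : G, Continuous fun h : G => h * g)
    (hnarrow : ∀ U ∈ nhds (1 : G), ∃ A : Set G, A.Countable ∧ U * A = Set.univ ∧
      A * U = Set.univ)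
    (θ : G → X → X)
    (hone : ∀ x : X, θ 1 x = x)
    (hcomp : ∀ (g h : G) (x : X), θ (g * h) x = θ g (θ h x))
    (hcont : Continuous fun p : G × X => θ p.1 p.2)
    (Θ : G → BoundedContinuousFunction X ℝ → BoundedContinuousFunction X ℝ)
    (hΘ : ∀ (g : G) (f : BoundedContinuousFunction X ℝ) (x : X), Θ g f x = f (θ g x))
    (f : BoundedContinuousFunction X ℝ)
    -- `f` is right-uniformly continuous
    (hruc : ∀ ε > (0 : ℝ), ∃ O ∈ nhds (1 : G), ∀ g ∈ O, ∀ x : X, |f x - f (θ g x)| < ε) :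
    TopologicalSpace.IsSeparable (Set.range fun g : G => Θ g f) :=
  orbit_separable_general hnarrow θ hcomp Θ hΘ f hruc
end

section
/- Let X be a pseudocompact space and G a semitopological group which is a k-space, and let θ : G × X → X be a continuous action. Then θ extends to a continuous action θ̃ : G × βX → βX on the Stone–Čech compactification βX. -/
/-!
Each translation `θ g` extends to `βX`, and uniqueness of extensions makes the extensions an
action. Since `βX` is completely regular, joint continuity reduces to continuity of
`g ↦ f ∘ θ̃ g` into `C(βX, ℝ)` for every `f`; as `G` is a k-space this may be checked on compact
`K ⊆ G`, and by density of `X` in `βX` it amounts to uniform convergence on `X` of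
`f ∘ θ k` as `k → k₀` in `K`. That is Glicksberg's lemma for a compact `K` and a pseudocompact
`X`: otherwise there are `kₙ, xₙ` with `|h (kₙ, xₙ)|` large and `|h (kₙ, xₘ)|` small for
`m < n`, and pseudocompactness of `X` with compactness of `K` yields a cluster point of the
pairs `(kₙ, y)`, `y` near `xₙ`, at which `h` would be both large and small.
-/

open Set Filter Topology unitInterval

class PseudocompactSpace (X : Type*) [TopologicalSpace X] : Prop where
  bounded : ∀ f : X → ℝ, Continuous f → ∃ M : ℝ, ∀ x : X, |f x| ≤ M

theorem TendstoUniformly.of_comp_denseRange {ι α β γ : Type*} [TopologicalSpace α]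
    [UniformSpace γ] {F : ι → α → γ} {f : α → γ} {p : Filter ι} {u : β → α} (hu : DenseRange u)
    (hF : ∀ i, Continuous (F i)) (hf : Continuous f)
    (h : TendstoUniformly (fun i => F i ∘ u) (f ∘ u) p) : TendstoUniformly F f p := by
  intro V hV
  obtain ⟨W, ⟨hW, hWc⟩, hWV⟩ := uniformity_hasBasis_closed.mem_iff.1 hV
  filter_upwards [h W hW] with i hi x
  exact hWV (hu.induction_on x (hWc.preimage (hf.prodMk (hF i))) hi)

theorem continuous_of_forall_continuous_comp_real {Z Y : Type*} [TopologicalSpace Z]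
    [TopologicalSpace Y] [CompletelyRegularSpace Y] {φ : Z → Y}
    (h : ∀ f : Y → ℝ, Continuous f → Continuous (f ∘ φ)) : Continuous φ := by
  refine continuous_iff_isClosed.2 fun C hC => ?_
  rw [← isOpen_compl_iff, isOpen_iff_mem_nhds]
  intro z hz
  obtain ⟨u, hu, hu0, hu1⟩ := CompletelyRegularSpace.completely_regular (φ z) C hC hz
  have hopen : IsOpen {w | (u (φ w) : ℝ) < 1} :=
    isOpen_lt (h _ (continuous_subtype_val.comp hu)) continuous_const
  refine mem_of_superset (hopen.mem_nhds (by simp [hu0])) fun w hw hwC => ?_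
  simp [hu1 hwC] at hw

theorem continuous_of_continuous_domRestrict_isCompact {G M : Type*} [TopologicalSpace G]
    [TopologicalSpace M]
    (hk : ∀ s : Set G, (∀ K : Set G, IsCompact K → IsClosed ((Subtype.val ⁻¹' s) : Set K)) →
      IsClosed s)
    {Ψ : G → M} (h : ∀ K : Set G, IsCompact K → Continuous (K.domRestrict Ψ)) : Continuous Ψ :=
  continuous_iff_isClosed.2 fun _ hS => hk _ fun K hK => hS.preimage (h K hK)

namespace PseudocompactSpace

variable {K X : Type*} [TopologicalSpace K] [TopologicalSpace X]
  [CompletelyRegularSpace X] [PseudocompactSpace X]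

-- Otherwise `∑ n * (bump function at a point of B n)` is an unbounded continuous function.
theorem not_locallyFinite {B : ℕ → Set X} (hBo : ∀ n, IsOpen (B n))
    (hBne : ∀ n, (B n).Nonempty) : ¬ LocallyFinite B := by
  intro hB
  choose b hb using hBne
  choose u hu hub huB using fun n =>
    CompletelyRegularSpace.completely_regular_isOpen (b n) (B n) (hBo n) (hb n)
  let φ : ℕ → X → ℝ := fun n x => n * σ (u n x)
  have hφ_nonneg : ∀ n x, 0 ≤ φ n x := fun n x => mul_nonneg n.cast_nonneg unitInterval.nonneg'
  have hφ_support : ∀ n, Function.support (φ n) ⊆ B n := fun n x hx => by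
    by_contra hxB
    simp [φ, huB n hxB] at hx
  have hφ_cont : ∀ n, Continuous (φ n) := fun n => by fun_prop
  obtain ⟨M, hM⟩ := bounded _ (continuous_finsum hφ_cont (hB.subset hφ_support))
  obtain ⟨n, hn⟩ := exists_nat_gt M
  have hsum : φ n (b n) ≤ ∑ᶠ m, φ m (b n) :=
    single_le_finsum n ((hB.point_finite (b n)).subset fun m hm => hφ_support m hm)
      fun m => hφ_nonneg m (b n)
  have hφ_bn : φ n (b n) = n := by simp [φ, hub n]
  linarith [le_abs_self (∑ᶠ m, φ m (b n)), hM (b n)]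

theorem exists_neBot_atTop_prod_nhds {O : ℕ → Set X} (hOo : ∀ n, IsOpen (O n))
    (hOne : ∀ n, (O n).Nonempty) :
    ∃ z, NeBot (atTop ×ˢ 𝓝 z ⊓ 𝓟 {p : ℕ × X | p.2 ∈ O p.1}) := by
  obtain ⟨z, hz⟩ : ∃ z, ∀ U ∈ 𝓝 z, {n | (O n ∩ U).Nonempty}.Infinite := by
    by_contra! h
    exact not_locallyFinite hOo hOne h
  refine ⟨z, inf_principal_neBot_iff.2 fun U hU => ?_⟩
  obtain ⟨T, hT, V, hV, hTV⟩ := mem_prod_iff.1 hU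
  obtain ⟨N, hN⟩ := mem_atTop_sets.1 hT
  obtain ⟨n, ⟨y, hyO, hyV⟩, hNn⟩ := Set.Infinite.exists_gt (hz V hV) N
  exact ⟨(n, y), hTV ⟨hN n hNn.le, hyV⟩, hyO⟩

theorem exists_abs_diag_lt [CompactSpace K] {h : K → X → ℝ} (hh : Continuous ↿h)
    {k : ℕ → K} {x : ℕ → X} {c δ : ℝ} (hδ : 0 < δ)
    (hc : ∀ m n, m < n → |h (k n) (x m)| ≤ c) : ∃ n, |h (k n) (x n)| < c + δ := by
  by_contra! hbig
  have hequi : ∀ n, ∀ᶠ y in 𝓝 (x n), ∀ k', dist (h k' y) (h k' (x n)) < δ / 4 := fun n => by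
    obtain ⟨v, hv, hvu⟩ := isCompact_univ.mem_uniformity_of_prod (f := fun y k' => h k' y)
      (hh.comp continuous_swap).continuousOn (mem_univ (x n))
      (Metric.dist_mem_uniformity (by positivity : 0 < δ / 4))
    rw [nhdsWithin_univ] at hv
    filter_upwards [hv] with y hy k' using hvu y hy k' (mem_univ k')
  choose O hO hOo hxO using fun n => eventually_nhds_iff.1 (hequi n)
  obtain ⟨z, hF⟩ := exists_neBot_atTop_prod_nhds hOo fun n => ⟨x n, hxO n⟩
  set F := atTop ×ˢ 𝓝 z ⊓ 𝓟 {p : ℕ × X | p.2 ∈ O p.1}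
  have hF_fst : Tendsto Prod.fst F atTop := tendsto_fst.mono_left inf_le_left
  have hF_snd : Tendsto Prod.snd F (𝓝 z) := tendsto_snd.mono_left inf_le_left
  have hF_O : ∀ᶠ p in F, p.2 ∈ O p.1 := mem_inf_of_right (mem_principal_self _)
  obtain ⟨⟨kk, z'⟩, hz' : z' = z, hq⟩ :=
    isProperMap_snd_of_compactSpace.clusterPt_of_mapClusterPt
      (ℱ := map (fun p : ℕ × X => (k p.1, p.2)) F) (y := z)
      (ClusterPt.of_le_nhds (by rw [Filter.map_map]; exact hF_snd))
  subst z'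
  have hmem : ∀ C : Set (K × X), IsClosed C → (∀ᶠ p in F, (k p.1, p.2) ∈ C) → (kk, z) ∈ C :=
    fun C hC hev => hC.closure_subset
      (mem_closure_iff_clusterPt.2 (hq.mono (le_principal_iff.2 hev)))
  have habs : Continuous fun q : K × X => |h q.1 q.2| := hh.abs
  -- The diagonal terms push `|h kk z|` up, the terms below the diagonal push it down.
  have hlow : c + δ / 2 ≤ |h kk z| := by
    refine hmem {q | c + δ / 2 ≤ |h q.1 q.2|} (isClosed_le continuous_const habs) ?_
    filter_upwards [hF_O] with p hp
    have := hO p.1 p.2 hp (k p.1)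
    rw [Real.dist_eq] at this
    linarith [hbig p.1, abs_sub_abs_le_abs_sub (h (k p.1) (x p.1)) (h (k p.1) p.2),
      abs_sub_comm (h (k p.1) (x p.1)) (h (k p.1) p.2)]
  have hseq : ∀ n, |h kk (x n)| ≤ c := fun n => by
    refine hmem {q | |h q.1 (x n)| ≤ c}
      (isClosed_le (habs.comp (continuous_fst.prodMk continuous_const)) continuous_const) ?_
    filter_upwards [hF_fst.eventually (eventually_gt_atTop n)] with p hp using hc n p.1 hp
  have hupp : |h kk z| ≤ c + δ / 4 := by
    refine le_of_tendsto ((habs.comp (continuous_const.prodMk continuous_id)).tendsto z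
      |>.comp hF_snd) ?_
    filter_upwards [hF_O] with p hp
    have := hO p.1 p.2 hp kk
    rw [Real.dist_eq] at this
    simp only [Function.comp_apply, id_eq]
    linarith [hseq p.1, abs_sub_abs_le_abs_sub (h kk p.2) (h kk (x p.1))]
  linarith

theorem tendstoUniformly [CompactSpace K] {f : K → X → ℝ} (hf : Continuous ↿f) (k₀ : K) :
    TendstoUniformly f (f k₀) (𝓝 k₀) := by
  rw [Metric.tendstoUniformly_iff]
  intro ε hε
  by_contra hfar
  let h : K → X → ℝ := fun k x => f k x - f k₀ x
  have hh : Continuous ↿h := hf.sub (hf.comp (continuous_const.prodMk continuous_snd))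
  obtain ⟨q, hq_far, hq_near⟩ : ∃ q : ℕ → K × X, (∀ n, ε ≤ |h (q n).1 (q n).2|) ∧
      ∀ m n, m < n → |h (q n).1 (q m).2| ≤ ε / 4 := by
    refine exists_seq_of_forall_finset_exists (fun p : K × X => ε ≤ |h p.1 p.2|)
      (fun p p' => |h p'.1 p.2| ≤ ε / 4) fun s _ => ?_
    have hnear : ∀ᶠ k in 𝓝 k₀, ∀ p ∈ s, |h k p.2| < ε / 4 :=
      (eventually_all_finset s).2 fun p _ =>
        ((hh.comp (continuous_id.prodMk continuous_const)).abs.continuousAt (x := k₀)).eventually_lt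
          continuousAt_const (show |h k₀ p.2| < ε / 4 by simp [h, hε])
    obtain ⟨k, hk_far, hk⟩ := ((not_eventually.1 hfar).and_eventually hnear).exists
    obtain ⟨x, hx⟩ := not_forall.1 hk_far
    rw [not_lt] at hx
    refine ⟨(k, x), ?_, fun p hp => (hk p hp).le⟩
    rwa [Real.dist_eq, abs_sub_comm] at hx
  obtain ⟨n, hn⟩ := exists_abs_diag_lt hh (half_pos hε) hq_near
  linarith [hq_far n]

theorem continuous_of_continuous_comp_stoneCechUnit [CompactSpace K]
    {φ : K → C(StoneCech X, ℝ)} (hφ : Continuous fun p : K × X => φ p.1 (stoneCechUnit p.2)) :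
    Continuous φ :=
  continuous_iff_continuousAt.2 fun k => ContinuousMap.tendsto_iff_tendstoUniformly.2 <|
    (tendstoUniformly (f := fun k x => φ k (stoneCechUnit x)) hφ k).of_comp_denseRange
      denseRange_stoneCechUnit (fun k => (φ k).continuous) (φ k).continuous

end PseudocompactSpace

theorem action_extends_to_stoneCech_general {G X : Type*} [Group G] [TopologicalSpace G]
    [TopologicalSpace X] [T35Space X]
    -- `G` is a k-space
    (hk : ∀ s : Set G, (∀ K : Set G, IsCompact K → IsClosed ((Subtype.val ⁻¹' s) : Set K)) →
      IsClosed s)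
    -- `X` is pseudocompact
    (hpc : ∀ f : X → ℝ, Continuous f → ∃ M : ℝ, ∀ x : X, |f x| ≤ M)
    (θ : G → X → X)
    (hone : ∀ x : X, θ 1 x = x)
    (hcomp : ∀ (g h : G) (x : X), θ (g * h) x = θ g (θ h x))
    (hcont : Continuous fun p : G × X => θ p.1 p.2) :
    ∃ θ' : G → StoneCech X → StoneCech X,
      (∀ (g : G) (x : X), θ' g (stoneCechUnit x) = stoneCechUnit (θ g x)) ∧
      (∀ y : StoneCech X, θ' 1 y = y) ∧
      (∀ (g h : G) (y : StoneCech X), θ' (g * h) y = θ' g (θ' h y)) ∧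
      Continuous fun p : G × StoneCech X => θ' p.1 p.2 := by
  have : PseudocompactSpace X := ⟨hpc⟩
  have hθ (g : G) : Continuous fun x => stoneCechUnit (θ g x) :=
    continuous_stoneCechUnit.comp (hcont.comp (Continuous.prodMk_right g))
  let θ' (g : G) : StoneCech X → StoneCech X := stoneCechExtend (hθ g)
  have hθ' (g : G) : Continuous (θ' g) := continuous_stoneCechExtend (hθ g)
  have hθ'_unit (g : G) (x : X) : θ' g (stoneCechUnit x) = stoneCechUnit (θ g x) :=
    stoneCechExtend_stoneCechUnit (hθ g) x
  refine ⟨θ', hθ'_unit, fun y => ?_, fun g h y => ?_, ?_⟩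
  · refine congrFun (stoneCech_hom_ext (hθ' 1) continuous_id (funext fun x => ?_)) y
    simp [hθ'_unit, hone]
  · refine congrFun (stoneCech_hom_ext (hθ' _) ((hθ' g).comp (hθ' h)) (funext fun x => ?_)) y
    simp [hθ'_unit, hcomp]
  refine continuous_of_forall_continuous_comp_real fun f hf => ?_
  let Φ (g : G) : C(StoneCech X, ℝ) := ⟨f ∘ θ' g, hf.comp (hθ' g)⟩
  have hΦ : Continuous Φ := continuous_of_continuous_domRestrict_isCompact hk fun K hK => by
    have := isCompact_iff_compactSpace.1 hK
    refine PseudocompactSpace.continuous_of_continuous_comp_stoneCechUnit ?_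
    change Continuous fun p : K × X => f (θ' p.1 (stoneCechUnit p.2))
    simp only [hθ'_unit]
    exact hf.comp (continuous_stoneCechUnit.comp
      (hcont.comp (continuous_subtype_val.prodMap continuous_id)))
  exact (hΦ.comp continuous_fst).eval continuous_snd

/-- A continuous action of a semitopological group `G` which is a k-space
on a pseudocompact (Tychonoff) space `X` extends to a continuous action on the
Stone–Čech compactification `βX`. -/
theorem action_extends_to_stoneCech {G X : Type*} [Group G] [TopologicalSpace G]
    [TopologicalSpace X] [T35Space X]
    (hmul_left : ∀ g : G, Continuous fun h : G => g * h)
    (hmul_right : ∀ g : G, Continuous fun h : G => h * g)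
    -- `G` is a k-space
    (hk : ∀ s : Set G, (∀ K : Set G, IsCompact K → IsClosed ((Subtype.val ⁻¹' s) : Set K)) →
      IsClosed s)
    -- `X` is pseudocompact
    (hpc : ∀ f : X → ℝ, Continuous f → ∃ M : ℝ, ∀ x : X, |f x| ≤ M)
    (θ : G → X → X)
    (hone : ∀ x : X, θ 1 x = x)
    (hcomp : ∀ (g h : G) (x : X), θ (g * h) x = θ g (θ h x))
    (hcont : Continuous fun p : G × X => θ p.1 p.2) :
    ∃ θ' : G → StoneCech X → StoneCech X,
      (∀ (g : G) (x : X), θ' g (stoneCechUnit x) = stoneCechUnit (θ g x)) ∧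
      (∀ y : StoneCech X, θ' 1 y = y) ∧
      (∀ (g h : G) (y : StoneCech X), θ' (g * h) y = θ' g (θ' h y)) ∧
      Continuous fun p : G × StoneCech X => θ' p.1 p.2 :=
  action_extends_to_stoneCech_general hk hpc θ hone hcomp hcont
end

section
/- Let G be a topological group acting separately continuously and transitively on a Baire space X. If G is ω-narrow, then every orbit map θ^x : G → X is nearly open, i.e., θ^x(U) ⊆ Int(cl(θ^x(U))) for every open U ⊆ G. -/
/-!
For a neighbourhood `V` of `1`, ω-narrowness gives countably many translates `a • V` covering
`G`, so by transitivity the closed sets `a • cl(V x)` cover `X`; by Baire one of them, hence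
`cl(V x)` itself, has nonempty interior. That interior meets `V x` in some `v x`, and
translating by `v⁻¹` puts `x` in the interior of `cl(V⁻¹ V x)`. Choosing `V` with `V⁻¹ V ⊆ U`
gives `x ∈ int cl(U x)` for every neighbourhood `U` of `1`, and translating by `g` gives the
claim at every point `g x` of the orbit.
-/

open scoped Topology Pointwise
open MulAction Set

def IsOmegaNarrow (G : Type*) [Group G] [TopologicalSpace G] : Prop :=
  ∀ U ∈ 𝓝 (1 : G), ∃ A : Set G, A.Countable ∧ U * A = univ

def IsNearlyOpenMap {α β : Type*} [TopologicalSpace α] [TopologicalSpace β] (f : α → β) :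
    Prop :=
  ∀ U : Set α, IsOpen U → f '' U ⊆ interior (closure (f '' U))

section

variable {G X : Type*} [Group G] [TopologicalSpace G] [IsTopologicalGroup G]

theorem IsOmegaNarrow.exists_countable_iUnion_smul_eq_univ (hG : IsOmegaNarrow G)
    {V : Set G} (hV : V ∈ 𝓝 1) : ∃ A : Set G, A.Countable ∧ ⋃ a ∈ A, a • V = univ := by
  obtain ⟨A, hA, hcover⟩ := hG V⁻¹ (inv_mem_nhds_one G hV)
  refine ⟨A⁻¹, hA.preimage inv_injective, eq_univ_of_forall fun g ↦ ?_⟩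
  obtain ⟨w, hw, a, ha, hwa : w * a = g⁻¹⟩ : g⁻¹ ∈ V⁻¹ * A := hcover ▸ mem_univ _
  refine mem_biUnion (x := a⁻¹) (by simpa using ha) ⟨w⁻¹, hw, ?_⟩
  show a⁻¹ * w⁻¹ = g
  rw [← mul_inv_rev, hwa, inv_inv]

variable [TopologicalSpace X] [BaireSpace X] [MulAction G X] [ContinuousConstSMul G X]
  [IsPretransitive G X]

theorem IsOmegaNarrow.interior_closure_smul_singleton_nonempty (hG : IsOmegaNarrow G)
    {V : Set G} (hV : V ∈ 𝓝 1) (x : X) : (interior (closure (V • {x}))).Nonempty := by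
  obtain ⟨A, hA, hcover⟩ := hG.exists_countable_iUnion_smul_eq_univ hV
  have : Nonempty X := ⟨x⟩
  have : Countable A := hA.to_subtype
  obtain ⟨⟨a, _⟩, ha⟩ : ∃ a : A, (interior (closure (((a : G) • V) • {x}))).Nonempty := by
    refine nonempty_interior_of_iUnion_of_closed (fun _ ↦ isClosed_closure) ?_
    refine eq_univ_of_forall fun y ↦ ?_
    obtain ⟨h, rfl⟩ := exists_smul_eq G x y
    obtain ⟨a, haA, hha⟩ := exists_set_mem_of_union_eq_top A _ hcover h
    exact mem_iUnion.2 ⟨⟨a, haA⟩, subset_closure (smul_mem_smul hha rfl)⟩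
  rw [smul_assoc, closure_smul, interior_smul] at ha
  exact smul_set_nonempty.1 ha

theorem IsOmegaNarrow.mem_interior_closure_smul_singleton (hG : IsOmegaNarrow G)
    {U : Set G} (hU : U ∈ 𝓝 1) (x : X) : x ∈ interior (closure (U • {x})) := by
  obtain ⟨V, hV, -, hV_symm, hVU⟩ := exists_closed_nhds_one_inv_eq_mul_subset hU
  obtain ⟨y, hy⟩ := hG.interior_closure_smul_singleton_nonempty hV x
  obtain ⟨_, hvx, v, hv, rfl⟩ : (interior (closure (V • {x})) ∩ (· • x) '' V).Nonempty := by
    rw [← smul_singleton]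
    exact mem_closure_iff.1 (interior_subset hy) _ isOpen_interior hy
  have hsub : (v⁻¹ • V) • ({x} : Set X) ⊆ U • {x} := by
    refine smul_subset_smul_right ((smul_set_subset_smul (inv_mem_inv.2 hv)).trans ?_)
    rwa [hV_symm]
  refine interior_mono (closure_mono hsub) ?_
  rwa [smul_assoc, closure_smul, interior_smul, mem_inv_smul_set_iff]

theorem IsOmegaNarrow.isNearlyOpenMap_smul (hG : IsOmegaNarrow G) (x : X) :
    IsNearlyOpenMap fun g : G ↦ g • x := by
  rintro U hU _ ⟨g, hg, rfl⟩
  have hU' : g⁻¹ • U ∈ 𝓝 (1 : G) :=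
    (hU.smul g⁻¹).mem_nhds (by simpa [mem_smul_set_iff_inv_smul_mem] using hg)
  rw [← smul_singleton, ← smul_inv_smul g U, smul_assoc, closure_smul, interior_smul]
  exact smul_mem_smul_set (hG.mem_interior_closure_smul_singleton hU' x)

end

theorem orbitMap_nearlyOpen_general {G X : Type*} [Group G] [TopologicalSpace G] [IsTopologicalGroup G]
    [TopologicalSpace X] [BaireSpace X]
    -- `G` is ω-narrow
    (hnarrow : ∀ U ∈ nhds (1 : G), ∃ A : Set G, A.Countable ∧ U * A = Set.univ)
    (θ : G → X → X)
    (hone : ∀ x : X, θ 1 x = x)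
    (hcomp : ∀ (g h : G) (x : X), θ (g * h) x = θ g (θ h x))
    (hsep₁ : ∀ g : G, Continuous (θ g))
    (htrans : ∀ x : X, Function.Surjective fun g : G => θ g x)
    (x : X) :
    ∀ U : Set G, IsOpen U →
      (fun g : G => θ g x) '' U ⊆ interior (closure ((fun g : G => θ g x) '' U)) := by
  let : MulAction G X := { smul := θ, one_smul := hone, mul_smul := hcomp }
  have : ContinuousConstSMul G X := ⟨hsep₁⟩
  have : IsPretransitive G X := ⟨htrans⟩
  exact IsOmegaNarrow.isNearlyOpenMap_smul hnarrow x

/-- For a separately continuous transitive action of an ω-narrow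
topological group `G` on a Baire space `X`, every orbit map `g ↦ θ g x` is nearly open. -/
theorem orbitMap_nearlyOpen {G X : Type*} [Group G] [TopologicalSpace G] [IsTopologicalGroup G]
    [TopologicalSpace X] [BaireSpace X]
    -- `G` is ω-narrow
    (hnarrow : ∀ U ∈ nhds (1 : G), ∃ A : Set G, A.Countable ∧ U * A = Set.univ)
    (θ : G → X → X)
    (hone : ∀ x : X, θ 1 x = x)
    (hcomp : ∀ (g h : G) (x : X), θ (g * h) x = θ g (θ h x))
    (hsep₁ : ∀ g : G, Continuous (θ g))
    (hsep₂ : ∀ x : X, Continuous fun g : G => θ g x)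
    (htrans : ∀ x : X, Function.Surjective fun g : G => θ g x)
    (x : X) :
    ∀ U : Set G, IsOpen U →
      (fun g : G => θ g x) '' U ⊆ interior (closure ((fun g : G => θ g x) '' U)) :=
  orbitMap_nearlyOpen_general hnarrow θ hone hcomp hsep₁ htrans x
end

section
/- Let X be a pseudocompact submetrizable Tychonoff space. Then X is a compact metrizable space. -/
/-!
Summing bumps of height `n` supported in the `n`-th member of a locally finite sequence of
nonempty open sets would give an unbounded continuous function, so in a pseudocompact Tychonoff
space every such sequence `Vₙ` accumulates at some point.

If `f` were not an embedding at `x`, some closed neighbourhood `C` of `x` would miss points whose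
`f`-image lies within `1 / (n + 1)` of `f x`, for every `n`; an accumulation point `z` of these
points satisfies `f z = f x` yet lies in the closure of `Cᶜ`, contradicting injectivity. So `X`
is metrizable, and an accumulation point of the balls of radius `1 / (n + 1)` around the terms of
a sequence is a cluster point of it, so `X` is compact.
-/

open Set Filter Topology Metric Function TopologicalSpace

variable {X : Type*} [TopologicalSpace X]

def PseudocompactSpace_s19 (X : Type*) [TopologicalSpace X] : Prop :=
  ∀ f : X → ℝ, Continuous f → ∃ M : ℝ, ∀ x, |f x| ≤ M

theorem Metric.mapClusterPt_of_frequently_ball_inter_nonempty {ι α : Type*}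
    [PseudoMetricSpace α] {F : Filter ι} {u : ι → α} {r : ι → ℝ} {z : α}
    (hr : Tendsto r F (𝓝 0)) (h : ∀ s ∈ 𝓝 z, ∃ᶠ i in F, (ball (u i) (r i) ∩ s).Nonempty) :
    MapClusterPt z F u := by
  refine mapClusterPt_iff_frequently.2 fun s hs => ?_
  obtain ⟨ε, hε, hball⟩ := Metric.mem_nhds_iff.1 hs
  refine ((h _ (ball_mem_nhds z (half_pos hε))).and_eventually
    (hr.eventually (gt_mem_nhds (half_pos hε)))).mono ?_
  rintro i ⟨⟨y, hyu, hyz⟩, hri⟩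
  refine hball ?_
  calc dist (u i) z ≤ dist y (u i) + dist y z := dist_triangle_left _ _ _
    _ < ε / 2 + ε / 2 := add_lt_add (lt_trans hyu hri) hyz
    _ = ε := add_halves ε

namespace PseudocompactSpace_s19

theorem not_locallyFinite_s19 [CompletelyRegularSpace X] (hX : PseudocompactSpace_s19 X)
    {V : ℕ → Set X} (hV : ∀ n, IsOpen (V n)) (hne : ∀ n, (V n).Nonempty) :
    ¬LocallyFinite V := by
  intro hlf
  choose p hp using hne
  choose g hg hgp hgV using fun n =>
    CompletelyRegularSpace.completely_regular (p n) (V n)ᶜ (hV n).isClosed_compl (not_not.2 (hp n))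
  set h : ℕ → X → ℝ := fun n x => n * (1 - g n x)
  have hsupp : ∀ n, support (h n) ⊆ V n := fun n x hx =>
    by_contra fun hxV => hx (by simp [h, hgV n hxV])
  have hlf' : LocallyFinite fun n => support (h n) := hlf.subset hsupp
  have hcont : Continuous fun x => ∑ᶠ n, h n x := continuous_finsum (fun n => by fun_prop) hlf'
  obtain ⟨M, hM⟩ := hX _ hcont
  obtain ⟨n, hn⟩ := exists_nat_gt M
  have hlarge : (n : ℝ) ≤ ∑ᶠ m, h m (p n) := calc
    (n : ℝ) = h n (p n) := by simp [h, hgp n]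
    _ ≤ _ := single_le_finsum n (hlf'.point_finite (p n)) fun m =>
      mul_nonneg m.cast_nonneg (sub_nonneg.2 (g m (p n)).2.2)
  linarith [le_abs_self (∑ᶠ m, h m (p n)), hM (p n), hlarge]

theorem exists_frequently_inter_nonempty [CompletelyRegularSpace X] (hX : PseudocompactSpace_s19 X)
    {V : ℕ → Set X} (hV : ∀ n, IsOpen (V n)) (hne : ∀ n, (V n).Nonempty) :
    ∃ z, ∀ s ∈ 𝓝 z, ∃ᶠ n in atTop, (V n ∩ s).Nonempty := by
  have := hX.not_locallyFinite_s19 hV hne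
  simp only [LocallyFinite, not_forall, not_exists, not_and] at this
  exact this.imp fun z hz s hs => Nat.frequently_atTop_iff_infinite.2 (hz s hs)

theorem compactSpace [PseudoMetrizableSpace X] (hX : PseudocompactSpace_s19 X) : CompactSpace X := by
  let := pseudoMetrizableSpacePseudoMetric X
  refine compactSpace_iff_seqCompactSpace.2 ⟨fun u _ => ?_⟩
  obtain ⟨z, hz⟩ := hX.exists_frequently_inter_nonempty (V := fun n => ball (u n) (1 / (n + 1)))
    (fun _ => isOpen_ball) fun n => ⟨u n, mem_ball_self Nat.one_div_pos_of_nat⟩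
  exact ⟨z, mem_univ z,
    (mapClusterPt_of_frequently_ball_inter_nonempty tendsto_one_div_add_atTop_nhds_zero_nat
      hz).tendsto_subseq⟩

theorem isEmbedding_of_injective [CompletelyRegularSpace X] {M : Type*} [MetricSpace M]
    (hX : PseudocompactSpace_s19 X) {f : X → M} (hf : Continuous f) (hinj : Injective f) :
    IsEmbedding f := by
  refine ⟨isInducing_iff_nhds.2 fun x => le_antisymm (hf.tendsto x).le_comap ?_, hinj⟩
  refine ((nhds_basis_ball.comap f).le_basis_iff (closed_nhds_basis x)).2 fun C ⟨hCx, hC⟩ => ?_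
  by_contra! hfar
  obtain ⟨z, hz⟩ := hX.exists_frequently_inter_nonempty
    (V := fun n => Cᶜ ∩ f ⁻¹' ball (f x) (1 / (n + 1)))
    (fun _ => hC.isOpen_compl.inter (isOpen_ball.preimage hf)) fun n => by
      obtain ⟨y, hy, hyC⟩ := not_subset.1 (hfar _ Nat.one_div_pos_of_nat)
      exact ⟨y, hyC, hy⟩
  have hfz : MapClusterPt (f z) atTop fun _ : ℕ => f x :=
    mapClusterPt_of_frequently_ball_inter_nonempty tendsto_one_div_add_atTop_nhds_zero_nat
      fun s hs => (hz _ (hf.continuousAt hs)).mono fun _ ⟨y, hyV, hys⟩ => ⟨f y, hyV.2, hys⟩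
  have hxz : f x ⤳ f z := specializes_iff_pure.2 fun s hs =>
    frequently_const.1 (mapClusterPt_iff_frequently.1 hfz s hs)
  obtain ⟨_, y, ⟨hyC, -⟩, hyC'⟩ := (hz C (hinj hxz.eq ▸ hCx)).exists
  exact hyC hyC'

end PseudocompactSpace_s19

/-- A pseudocompact submetrizable Tychonoff space is compact and
metrizable. -/
theorem pseudocompact_submetrizable_compact_metrizable {X : Type u} [TopologicalSpace X]
    [T35Space X]
    -- `X` is pseudocompact
    (hpc : ∀ f : X → ℝ, Continuous f → ∃ M : ℝ, ∀ x : X, |f x| ≤ M)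
    -- `X` is submetrizable: it admits a continuous injection into a metrizable space
    (hsub : ∃ (M : Type u) (_ : MetricSpace M) (f : X → M),
      Continuous f ∧ Function.Injective f) :
    CompactSpace X ∧ TopologicalSpace.MetrizableSpace X := by
  obtain ⟨M, _, f, hf, hinj⟩ := hsub
  have hX : PseudocompactSpace_s19 X := hpc
  have := (hX.isEmbedding_of_injective hf hinj).metrizableSpace
  exact ⟨hX.compactSpace, this⟩
end
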